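/- arXiv:2001.06746 — 4 statements merged into one kernel-verified Lean document; each statement's English description precedes it below -/
import Mathlib

section
/- Under conditional independence of S and Z given X, and given a subset W ⊂ Z of instrument values such that the events {S ∈ Σ, T = t'} and {S ∈ Σ, Z ∈ W} coincide, the probability P(T = t', S ∈ Σ) equals E[ P(S ∈ Σ | X) · π_W(X) ], where π_W(X) = Σ_{z∈W} P(Z = z | X). -/
open MeasureTheory ProbabilityTheory

/-!
By the event coincidence, `{S ∈ Σ, T = t'}` is the disjoint union over `z ∈ W` of the events
`{S ∈ Σ, Z = z}`. Conditional independence factors `P(S ∈ Σ, Z = z | X)` as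
`P(S ∈ Σ | X) · P(Z = z | X)`, and integrating over `Ω` recovers `P(S ∈ Σ, Z = z)`; summing
over `z ∈ W` gives the claim.
-/

theorem measureReal_inter_preimage_finset {Ω β : Type*} {mΩ : MeasurableSpace Ω}
    {μ : Measure Ω} [IsFiniteMeasure μ] [MeasurableSpace β] [MeasurableSingletonClass β]
    {g : Ω → β} (hg : Measurable g) {A : Set Ω} (hA : MeasurableSet A) (s : Finset β) :
    μ.real (A ∩ g ⁻¹' s) = ∑ b ∈ s, μ.real (A ∩ g ⁻¹' {b}) := by
  rw [← Finset.set_biUnion_preimage_singleton, Set.inter_iUnion₂]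
  refine measureReal_biUnion_finset ?_ fun b _ => hA.inter (hg (measurableSet_singleton b))
  exact (Set.pairwiseDisjoint_fiber g s).mono fun b => Set.inter_subset_right

/-- Conditional probabilities given `X` are conditional expectations of indicators given the
σ-algebra `mX` generated by `X`. -/
theorem prob_treatment_and_type_identification_general
    {Ω 𝓩 𝓢 𝓣 : Type*} {mΩ : MeasurableSpace Ω} [StandardBorelSpace Ω]
    [MeasurableSpace 𝓩] [MeasurableSingletonClass 𝓩] [MeasurableSpace 𝓢]
    (μ : Measure Ω) [IsProbabilityMeasure μ]
    (mX : MeasurableSpace Ω) (hmX : mX ≤ mΩ)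
    (S : Ω → 𝓢) (Z : Ω → 𝓩) (T : Ω → 𝓣)
    (hSmeas : Measurable[mΩ] S) (hZmeas : Measurable[mΩ] Z)
    (hSZ : CondIndepFun mX hmX S Z μ)
    (Sig : Set 𝓢) (hSig : MeasurableSet Sig) (t' : 𝓣) (W : Finset 𝓩)
    (hW : ∀ ω, (S ω ∈ Sig ∧ T ω = t') ↔ (S ω ∈ Sig ∧ Z ω ∈ W)) :
    (μ {ω | S ω ∈ Sig ∧ T ω = t'}).toReal
      = ∫ ω, (MeasureTheory.condExp mX μ ((S ⁻¹' Sig).indicator (fun _ => (1 : ℝ))) ω)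
          * (∑ z ∈ W, MeasureTheory.condExp mX μ ((Z ⁻¹' {z}).indicator (fun _ => (1 : ℝ))) ω) ∂μ := by
  have hevent : {ω | S ω ∈ Sig ∧ T ω = t'} = S ⁻¹' Sig ∩ Z ⁻¹' W := Set.ext hW
  have hfactor (z : 𝓩) : μ⟦S ⁻¹' Sig ∩ Z ⁻¹' {z} | mX⟧
      =ᵐ[μ] fun ω => (μ⟦S ⁻¹' Sig | mX⟧) ω * (μ⟦Z ⁻¹' {z} | mX⟧) ω :=
    (condIndepFun_iff_condExp_inter_preimage_eq_mul hSmeas hZmeas).mp hSZ _ _ hSig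
      (measurableSet_singleton z)
  have hfiber (z : 𝓩) :
      ∫ ω, (μ⟦S ⁻¹' Sig | mX⟧) ω * (μ⟦Z ⁻¹' {z} | mX⟧) ω ∂μ = μ.real (S ⁻¹' Sig ∩ Z ⁻¹' {z}) := by
    rw [← integral_congr_ae (hfactor z), integral_condExp hmX]
    exact integral_indicator_one ((hSmeas hSig).inter (hZmeas (measurableSet_singleton z)))
  simp_rw [← measureReal_def, hevent, measureReal_inter_preimage_finset hZmeas (hSmeas hSig),
    Finset.mul_sum, integral_finsetSum W fun z _ => integrable_condExp.congr (hfactor z), hfiber]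

/-- Under `S ⊥ Z | X` and the event coincidence `{S ∈ Σ, T = t'} = {S ∈ Σ, Z ∈ W}`,
the probability `P(T = t', S ∈ Σ)` equals `E[ P(S ∈ Σ | X) · π_W(X) ]`, where
`π_W(X) = ∑_{z ∈ W} P(Z = z | X)` and conditional probabilities given `X` are
conditional expectations of indicators given the σ-algebra `mX` generated by `X`. -/
theorem prob_treatment_and_type_identification
    {Ω 𝓩 𝓢 𝓣 : Type*} {mΩ : MeasurableSpace Ω} [StandardBorelSpace Ω] [Nonempty Ω]
    [MeasurableSpace 𝓩] [MeasurableSingletonClass 𝓩] [MeasurableSpace 𝓢]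
    (μ : Measure Ω) [IsProbabilityMeasure μ]
    (mX : MeasurableSpace Ω) (hmX : mX ≤ mΩ)
    (S : Ω → 𝓢) (Z : Ω → 𝓩) (T : Ω → 𝓣)
    (hSmeas : Measurable[mΩ] S) (hZmeas : Measurable[mΩ] Z)
    (hSZ : CondIndepFun mX hmX S Z μ)
    (Sig : Set 𝓢) (hSig : MeasurableSet Sig) (t' : 𝓣) (W : Finset 𝓩)
    (hW : ∀ ω, (S ω ∈ Sig ∧ T ω = t') ↔ (S ω ∈ Sig ∧ Z ω ∈ W)) :
    (μ {ω | S ω ∈ Sig ∧ T ω = t'}).toReal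
      = ∫ ω, (MeasureTheory.condExp mX μ ((S ⁻¹' Sig).indicator (fun _ => (1 : ℝ))) ω)
          * (∑ z ∈ W, MeasureTheory.condExp mX μ ((Z ⁻¹' {z}).indicator (fun _ => (1 : ℝ))) ω) ∂μ :=
  prob_treatment_and_type_identification_general μ mX hmX S Z T hSmeas hZmeas hSZ Sig hSig t' W hW
end

section
/- Let P(T = t | Z = z, X) = Σ_{s∈S} 1{s(z) = t} P(S = s | X) hold for all t, z (which follows from S ⊥ Z | X and T determined by (S,Z)). If b is a row vector and B_t the binary matrix with B_t[i,j] = 1{s_j(z_i) = t}, and b B_t⁺ B_t = b, then for Σ = {s_j : b[j] = 1}, P(S ∈ Σ | X) = (b B_t⁺) · P_{t,Z}(X), where P_{t,Z}(X) is the vector with entries P(T = t | Z = z_i, X). -/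
/-! The hypothesis on `PtZ` says `P_{t,Z}(X) = B_t q(X)`, so
`(b B_t⁺) ⬝ P_{t,Z}(X) = (b B_t⁺ B_t) ⬝ q(X) = b ⬝ q(X)`, and a 0/1 vector `b` picks out the
types in `Σ`. -/

open Matrix

namespace Matrix

variable {ι κ R : Type*} [Fintype ι] [Fintype κ]

theorem dotProduct_eq_sum_filter_eq_one [Semiring R] [DecidableEq R] {b : ι → R}
    (hb : ∀ j, b j = 0 ∨ b j = 1) (q : ι → R) :
    b ⬝ᵥ q = ∑ j ∈ Finset.univ.filter (fun j => b j = 1), q j := by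
  rw [dotProduct, Finset.sum_filter]
  refine Finset.sum_congr rfl fun j _ => ?_
  rcases hb j with h | h
  · simpa [h] using fun h01 => (eq_zero_of_zero_eq_one h01 (q j)).symm
  · simp [h]

theorem vecMul_dotProduct_mulVec_of_vecMul_mul_eq [Semiring R] {b : κ → R}
    {A : Matrix κ ι R} {B : Matrix ι κ R} (hb : b ᵥ* (A * B) = b) (q : κ → R) :
    (b ᵥ* A) ⬝ᵥ (B *ᵥ q) = b ⬝ᵥ q := by
  rw [dotProduct_mulVec, vecMul_vecMul, hb]

end Matrix

/-- Identification of type probabilities (Lemma of Heckman–Pinto): suppose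
`P(T = t | Z = z_i, X) = ∑_j 1{s_j(z_i) = t} q_j(X)` where `q_j(X) = P(S = s_j | X)`,
let `B_t` be the binary matrix `B_t[i,j] = 1{s_j(z_i) = t}`, and let `b` be a 0/1 row
vector with `b B_t⁺ B_t = b`.  Then for `Σ = {s_j : b_j = 1}`,
`P(S ∈ Σ | X) = (b B_t⁺) ⬝ P_{t,Z}(X)`, where `P_{t,Z}(X)` is the vector of
`P(T = t | Z = z_i, X)`. -/
theorem type_prob_identification {NZ NS : ℕ} {𝓩 𝓣 : Type*} [DecidableEq 𝓣]
    (z : Fin NZ → 𝓩) (s : Fin NS → 𝓩 → 𝓣) (t : 𝓣)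
    (Bt : Matrix (Fin NZ) (Fin NS) ℝ)
    (hBt : ∀ i j, Bt i j = if s j (z i) = t then 1 else 0)
    (Bplus : Matrix (Fin NS) (Fin NZ) ℝ)
    (b : Fin NS → ℝ) (hb01 : ∀ j, b j = 0 ∨ b j = 1)
    (hb : Matrix.vecMul b (Bplus * Bt) = b)
    {Ω : Type*} (q : Ω → Fin NS → ℝ) (PtZ : Ω → Fin NZ → ℝ)
    (hPtZ : ∀ ω i, PtZ ω i = ∑ j, (if s j (z i) = t then (1 : ℝ) else 0) * q ω j) :
    ∀ ω, ∑ j ∈ Finset.univ.filter (fun j => b j = 1), q ω j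
      = Matrix.vecMul b Bplus ⬝ᵥ PtZ ω := by
  intro ω
  have hPtZ_eq : PtZ ω = Bt *ᵥ q ω := funext fun i => by
    simp only [hPtZ, mulVec, dotProduct, hBt]
  rw [hPtZ_eq, vecMul_dotProduct_mulVec_of_vecMul_mul_eq hb,
    dotProduct_eq_sum_filter_eq_one hb01]
end

section
/- Let Q: X × (B_Y × Σ_t) → ℝ be defined by Q_t(x, (B, Σ)) = b̃ · 1B_{t,Z}(x) for identifiable pairs, and suppose a family of probability kernels Q̃_t extending the Q_t exists, agreeing in total mass across t (Assumption 3). Then the joint law of potential outcomes and types constructed as the product P(Y_{t_1} ∈ B_1, ..., Y_{t_{N_T}} ∈ B_{N_T}, S ∈ Σ | Z=z, X) = (∏_t Q̃_t(X, B_t × Σ)/Q̃_t(X, Y × Σ)) · Q̃_{t_1}(X, Y × Σ) defines a valid probability measure on Y^{N_T} × S, not depending on z, whose t-marginal joint with S equals Q̃_t. -/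
open MeasureTheory

open scoped NNReal ENNReal

namespace MeasureTheory.Measure

variable {α β γ ι : Type*} [MeasurableSpace α] [MeasurableSpace β] [MeasurableSpace γ]

lemma isProbabilityMeasure_finset_sum_smul (s : Finset ι) (w : ι → ℝ≥0) (hw : ∑ i ∈ s, w i = 1)
    (μ : ι → Measure α) [∀ i, IsProbabilityMeasure (μ i)] :
    IsProbabilityMeasure (∑ i ∈ s, (w i : ℝ≥0∞) • μ i) := by
  constructor
  simp only [coe_finsetSum, Finset.sum_apply, smul_apply, measure_univ, smul_eq_mul, mul_one]
  exact_mod_cast hw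

lemma map_finset_sum_smul {f : α → β} (hf : Measurable f) (s : Finset ι) (c : ι → ℝ≥0∞)
    (μ : ι → Measure α) :
    map f (∑ i ∈ s, c i • μ i) = ∑ i ∈ s, c i • map f (μ i) := by
  rw [map_finset_sum hf.aemeasurable]
  exact Finset.sum_congr rfl fun i _ => Measure.map_smul _ _ _

lemma map_prodMap_id_map_prodMk_const {f : α → β} (hf : Measurable f) (μ : Measure α) (c : γ) :
    map (Prod.map f id) (map (fun a => (a, c)) μ) = map (fun b => (b, c)) (map f μ) := by
  rw [map_map (by fun_prop) (by fun_prop), map_map (by fun_prop) hf]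
  rfl

end MeasureTheory.Measure

open MeasureTheory.Measure in
theorem kernel_product_construction_general
    {𝓨 : Type*} [MeasurableSpace 𝓨] {S : Type*} [Fintype S] [MeasurableSpace S]
    {NT : ℕ}
    (ν : Fin NT → S → Measure 𝓨) (hν : ∀ t s, IsProbabilityMeasure (ν t s))
    (w : S → NNReal) (hw : ∑ s, w s = 1) (t : Fin NT) :
    IsProbabilityMeasure
        (∑ s : S, (w s : ENNReal) •
          (Measure.map (fun y => (y, s)) (Measure.pi (fun t' => ν t' s)))) ∧
      Measure.map (fun p : (Fin NT → 𝓨) × S => (p.1 t, p.2))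
          (∑ s : S, (w s : ENNReal) •
            (Measure.map (fun y => (y, s)) (Measure.pi (fun t' => ν t' s))))
        = ∑ s : S, (w s : ENNReal) • (Measure.map (fun y => (y, s)) (ν t s)) := by
  have hπ (s : S) : IsProbabilityMeasure (map (fun y => (y, s)) (Measure.pi fun t' => ν t' s)) :=
    isProbabilityMeasure_map (by fun_prop)
  refine ⟨isProbabilityMeasure_finset_sum_smul _ w hw _, ?_⟩
  change map (Prod.map (Function.eval t) id) _ = _
  rw [map_finset_sum_smul (by fun_prop)]
  refine Finset.sum_congr rfl fun s _ => ?_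
  rw [map_prodMap_id_map_prodMk_const (measurable_pi_apply t),
    (measurePreserving_eval (fun t' => ν t' s) t).map_eq]

/-- Construction of a joint law of potential outcomes and types from the family of
kernels `Q̃_t` (Assumption 3).  For each type `s`, let `ν t s` be the normalized
conditional law `Q̃_t(X, · × {s})/Q̃_t(X, 𝓨 × {s})` (a probability measure on the
outcome space), and let `w s = Q̃_t(X, 𝓨 × {s})` be the common (across `t`) type
masses, with `∑ s, w s = 1`.  Then the product construction
`P = ∑ s, w s • (⊗_t ν t s) ⊗ δ_s` is a valid probability measure on
`𝓨^{N_T} × S` (independent of the instrument value `z`, which does not enter the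
construction), and for each `t` its `t`-marginal jointly with the type equals
`∑ s, w s • (ν t s) ⊗ δ_s`, i.e. it agrees with `Q̃_t`. -/
theorem kernel_product_construction
    {𝓨 : Type*} [MeasurableSpace 𝓨] {S : Type*} [Fintype S] [MeasurableSpace S]
    [MeasurableSingletonClass S] {NT : ℕ}
    (ν : Fin NT → S → Measure 𝓨) (hν : ∀ t s, IsProbabilityMeasure (ν t s))
    (w : S → NNReal) (hw : ∑ s, w s = 1) (t : Fin NT) :
    IsProbabilityMeasure
        (∑ s : S, (w s : ENNReal) •
          (Measure.map (fun y => (y, s)) (Measure.pi (fun t' => ν t' s)))) ∧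
      Measure.map (fun p : (Fin NT → 𝓨) × S => (p.1 t, p.2))
          (∑ s : S, (w s : ENNReal) •
            (Measure.map (fun y => (y, s)) (Measure.pi (fun t' => ν t' s))))
        = ∑ s : S, (w s : ENNReal) • (Measure.map (fun y => (y, s)) (ν t s)) :=
  kernel_product_construction_general ν hν w hw t
end

section
/- If for every type s ∈ S and every treatment t and instrument pair (z, z') the set S satisfies unordered monotonicity, then for each t and each k, all types s, s' in Σ_{t,k} have identical t-indicator columns: 1{s(z) = t} = 1{s'(z) = t} for every instrument z. -/
/-! Unordered monotonicity makes the sets `{z | s z = t}`, `s ∈ S`, totally ordered by inclusion,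
and two nested finite sets of the same cardinality coincide. -/

open Finset

theorem le_or_ge_of_forall_or {ι α : Type*} {S : Set ι} {P : ι → α → Prop}
    (h : ∀ a b : α, (∀ i ∈ S, P i b → P i a) ∨ (∀ i ∈ S, P i a → P i b))
    {i j : ι} (hi : i ∈ S) (hj : j ∈ S) : P i ≤ P j ∨ P j ≤ P i := by
  by_contra! hij
  obtain ⟨⟨a, hia, hja⟩, ⟨b, hjb, hib⟩⟩ : (∃ a, P i a ∧ ¬P j a) ∧ ∃ b, P j b ∧ ¬P i b := by
    simpa [Pi.le_def] using hij
  rcases h a b with hba | hab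
  · exact hja (hba j hj hjb)
  · exact hib (hab i hi hia)

theorem Finset.filter_univ_iff_of_le_or_ge_of_card_eq {α : Type*} [Fintype α] {p q : α → Prop}
    [DecidablePred p] [DecidablePred q] (hpq : p ≤ q ∨ q ≤ p)
    (hcard : #(univ.filter p) = #(univ.filter q)) (a : α) : p a ↔ q a := by
  suffices univ.filter p = univ.filter q by
    simpa using Finset.ext_iff.mp this a
  rcases hpq with hpq | hqp
  · exact eq_of_subset_of_card_le (monotone_filter_right _ fun a _ => hpq a) hcard.ge
  · exact (eq_of_subset_of_card_le (monotone_filter_right _ fun a _ => hqp a) hcard.le).symm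

/-- The indicator inequality `1{s(z)=t} ≥ 1{s(z')=t}` for all `s ∈ S` is expressed as
`∀ s ∈ S, s z' = t → s z = t`. -/
theorem same_stratum_same_column {𝓩 𝓣 : Type*} [Fintype 𝓩] [DecidableEq 𝓣]
    (S : Set (𝓩 → 𝓣))
    (hmono : ∀ t : 𝓣, ∀ z z' : 𝓩,
      (∀ s ∈ S, s z' = t → s z = t) ∨ (∀ s ∈ S, s z = t → s z' = t))
    (t : 𝓣) (k : ℕ) :
    ∀ s ∈ S, ∀ s' ∈ S,
      (Finset.univ.filter (fun z => s z = t)).card = k →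
      (Finset.univ.filter (fun z => s' z = t)).card = k →
      ∀ z, (s z = t ↔ s' z = t) := by
  intro s hs s' hs' hk hk'
  exact filter_univ_iff_of_le_or_ge_of_card_eq
    (le_or_ge_of_forall_or (P := fun s z => s z = t) (hmono t) hs hs') (hk.trans hk'.symm)
end
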